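/- In the Laurent polynomial ring ℤ[Q_1^{±1}, Q_2^{±1}], let S = {Q_1, Q_2 Q_1^{-1}, Q_1^2 Q_2^{-1}, Q_1^{-1}, Q_1 Q_2^{-1}, Q_2 Q_1^{-2}}, and let σ_1 = Σ_{s∈S} s, σ_2 = Σ_{s<t, s,t∈S} s·t be the first and second elementary symmetric functions of the six elements of S. Then, as an identity of polynomials in μ over ℤ[Q_1^{±1},Q_2^{±1}]: ∏_{s∈S} (μ − s) = μ^6 − σ_1 μ^5 + σ_2 μ^4 − (σ_1² + 2σ_1 − 2σ_2 + 2) μ^3 + σ_2 μ^2 − σ_1 μ + 1. -/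

import Mathlib

/-!
The six monomials are `x^{±1}, y^{±1}, z^{±1}` with `x = Q₁`, `y = Q₁Q₂⁻¹`, `z = Q₂Q₁⁻²`, and
`xyz = 1`. Hence the product splits into three palindromic quadratics `μ² - aμ + 1` with
`a = x + x⁻¹`, `b = y + y⁻¹`, `c = z + z⁻¹`, so that `σ₁ = a + b + c`, `σ₂ = ab + bc + ca + 3` and
`e₃ = abc + 2(a + b + c)`. The relation `xyz = 1` gives the Fricke identity
`abc = a² + b² + c² - 4`, which turns `e₃` into `σ₁² + 2σ₁ - 2σ₂ + 2`.
-/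

open Polynomial Finset

noncomputable section

/-- The Laurent polynomial ring `ℤ[Q₁^{±1}, Q₂^{±1}]`. -/
abbrev LaurentZ2 : Type := AddMonoidAlgebra ℤ (ℤ × ℤ)

/-- The monomial `Q₁^a Q₂^b`. -/
noncomputable def mon (a b : ℤ) : LaurentZ2 := AddMonoidAlgebra.single (a, b) 1

/-- The six short-root monomials of `G₂`:
`Q₁, Q₂Q₁⁻¹, Q₁²Q₂⁻¹, Q₁⁻¹, Q₁Q₂⁻¹, Q₂Q₁⁻²`. -/
noncomputable def shortG2 : Fin 6 → LaurentZ2 :=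
  ![mon 1 0, mon (-1) 1, mon 2 (-1), mon (-1) 0, mon 1 (-1), mon (-2) 1]

theorem sum_filter_lt_fin_six {R : Type*} [CommSemiring R] (f : Fin 6 → R) :
    ∑ p ∈ univ.filter (fun p : Fin 6 × Fin 6 => p.1 < p.2), f p.1 * f p.2 =
      f 0 * (f 1 + f 2 + f 3 + f 4 + f 5) + f 1 * (f 2 + f 3 + f 4 + f 5) +
        f 2 * (f 3 + f 4 + f 5) + f 3 * (f 4 + f 5) + f 4 * f 5 := by
  rw [sum_filter, ← univ_product_univ, sum_product]
  simp only [Fin.sum_univ_six, Fin.isValue, not_lt_zero, ↓reduceIte, Fin.lt_one_iff,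
    Nat.reduceAdd, zero_add, Fin.reduceLT, one_ne_zero, Fin.reduceEq, lt_self_iff_false, add_zero]
  ring

section Hexagon

variable {R : Type*} [CommRing R]

theorem X_sub_C_mul_X_sub_C_inv (u : Rˣ) :
    (X - C (u : R)) * (X - C (↑u⁻¹ : R)) = X ^ 2 - C (↑u + ↑u⁻¹ : R) * X + 1 := by
  have h : C (u : R) * C (↑u⁻¹ : R) = 1 := by rw [← C_mul, Units.mul_inv, C_1]
  rw [C_add]
  linear_combination h

theorem palindromic_quadratics_mul (a b c : R) :
    (X ^ 2 - C a * X + 1) * (X ^ 2 - C b * X + 1) * (X ^ 2 - C c * X + 1) =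
      X ^ 6 - C (a + b + c) * X ^ 5 + C (a * b + b * c + c * a + 3) * X ^ 4 -
        C (a * b * c + 2 * (a + b + c)) * X ^ 3 + C (a * b + b * c + c * a + 3) * X ^ 2 -
        C (a + b + c) * X + 1 := by
  simp only [map_add, map_mul, map_ofNat]
  ring

/- The Fricke trace identity `tr A tr B tr AB = tr² A + tr² B + tr² AB - 4` for commuting
`A, B ∈ SL₂`, in terms of eigenvalues. -/
theorem fricke_of_mul_mul_eq_one {x y z : Rˣ} (h : x * y * z = 1) :
    (↑x + ↑x⁻¹) * (↑y + ↑y⁻¹) * (↑z + ↑z⁻¹) =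
      (↑x + ↑x⁻¹) ^ 2 + (↑y + ↑y⁻¹) ^ 2 + ((↑z + ↑z⁻¹) ^ 2 : R) - 4 := by
  obtain rfl : z = (x * y)⁻¹ := eq_inv_of_mul_eq_one_right h
  have hx : (x : R) * ↑x⁻¹ = 1 := Units.mul_inv x
  have hy : (y : R) * ↑y⁻¹ = 1 := Units.mul_inv y
  simp only [inv_inv, mul_inv, Units.val_mul]
  linear_combination ((y : R) ^ 2 + (↑y⁻¹) ^ 2 - 2) * hx + ((x : R) ^ 2 + (↑x⁻¹) ^ 2 - 2) * hy

theorem palindromic_quadratics_mul_of_fricke {a b c : R}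
    (h : a * b * c = a ^ 2 + b ^ 2 + c ^ 2 - 4) :
    (X ^ 2 - C a * X + 1) * (X ^ 2 - C b * X + 1) * (X ^ 2 - C c * X + 1) =
      X ^ 6 - C (a + b + c) * X ^ 5 + C (a * b + b * c + c * a + 3) * X ^ 4 -
        C ((a + b + c) ^ 2 + 2 * (a + b + c) - 2 * (a * b + b * c + c * a + 3) + 2) * X ^ 3 +
        C (a * b + b * c + c * a + 3) * X ^ 2 - C (a + b + c) * X + 1 := by
  have e₃ : a * b * c + 2 * (a + b + c) =
      (a + b + c) ^ 2 + 2 * (a + b + c) - 2 * (a * b + b * c + c * a + 3) + 2 := by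
    linear_combination h
  rw [palindromic_quadratics_mul, e₃]

-- Ordered so that `shortG2` is `hexagon Q₁ (Q₁Q₂⁻¹) (Q₂Q₁⁻²)`.
def hexagon (x y z : Rˣ) : Fin 6 → R := ![x, ↑y⁻¹, ↑z⁻¹, ↑x⁻¹, y, z]

theorem prod_X_sub_C_hexagon (x y z : Rˣ) :
    ∏ i, (X - C (hexagon x y z i)) =
      (X ^ 2 - C (↑x + ↑x⁻¹ : R) * X + 1) * (X ^ 2 - C (↑y + ↑y⁻¹ : R) * X + 1) *
        (X ^ 2 - C (↑z + ↑z⁻¹ : R) * X + 1) := by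
  rw [Fin.prod_univ_six, ← X_sub_C_mul_X_sub_C_inv, ← X_sub_C_mul_X_sub_C_inv,
    ← X_sub_C_mul_X_sub_C_inv]
  simp only [hexagon, Fin.isValue, Matrix.cons_val_zero, Matrix.cons_val_one, Matrix.cons_val]
  ring

theorem sum_hexagon (x y z : Rˣ) :
    ∑ i, hexagon x y z i = (↑x + ↑x⁻¹) + (↑y + ↑y⁻¹) + (↑z + ↑z⁻¹ : R) := by
  simp only [Fin.sum_univ_six, hexagon, Fin.isValue, Matrix.cons_val_zero, Matrix.cons_val_one,
    Matrix.cons_val]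
  ring

theorem sum_pairs_hexagon (x y z : Rˣ) :
    ∑ p ∈ univ.filter (fun p : Fin 6 × Fin 6 => p.1 < p.2),
        hexagon x y z p.1 * hexagon x y z p.2 =
      (↑x + ↑x⁻¹) * (↑y + ↑y⁻¹) + (↑y + ↑y⁻¹) * (↑z + ↑z⁻¹) + (↑z + ↑z⁻¹) * (↑x + ↑x⁻¹ : R) +
        3 := by
  have hx : (x : R) * ↑x⁻¹ = 1 := Units.mul_inv x
  have hy : (y : R) * ↑y⁻¹ = 1 := Units.mul_inv y
  have hz : (z : R) * ↑z⁻¹ = 1 := Units.mul_inv z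
  rw [sum_filter_lt_fin_six]
  simp only [hexagon, Fin.isValue, Matrix.cons_val_zero, Matrix.cons_val_one, Matrix.cons_val]
  linear_combination hx + hy + hz

end Hexagon

theorem mon_mul (a b c d : ℤ) : mon a b * mon c d = mon (a + c) (b + d) := by
  simp [mon, AddMonoidAlgebra.single_mul_single]

theorem mon_zero_zero : mon 0 0 = 1 := rfl

def monUnit (a b : ℤ) : LaurentZ2ˣ where
  val := mon a b
  inv := mon (-a) (-b)
  val_inv := by rw [mon_mul, add_neg_cancel, add_neg_cancel, mon_zero_zero]
  inv_val := by rw [mon_mul, neg_add_cancel, neg_add_cancel, mon_zero_zero]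

theorem shortG2_eq_hexagon :
    shortG2 = hexagon (monUnit 1 0) (monUnit 1 (-1)) (monUnit (-2) 1) := by
  funext i
  fin_cases i <;> rfl

theorem stmt6 :
    ∏ i : Fin 6, (X - C (shortG2 i)) =
      X ^ 6 - C (∑ i : Fin 6, shortG2 i) * X ^ 5 +
        C (∑ p ∈ Finset.univ.filter (fun p : Fin 6 × Fin 6 => p.1 < p.2),
            shortG2 p.1 * shortG2 p.2) * X ^ 4 -
        C ((∑ i : Fin 6, shortG2 i) ^ 2 + 2 * (∑ i : Fin 6, shortG2 i) -
            2 * (∑ p ∈ Finset.univ.filter (fun p : Fin 6 × Fin 6 => p.1 < p.2),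
              shortG2 p.1 * shortG2 p.2) + 2) * X ^ 3 +
        C (∑ p ∈ Finset.univ.filter (fun p : Fin 6 × Fin 6 => p.1 < p.2),
            shortG2 p.1 * shortG2 p.2) * X ^ 2 -
        C (∑ i : Fin 6, shortG2 i) * X + 1 := by
  have h : monUnit 1 0 * monUnit 1 (-1) * monUnit (-2) 1 = 1 :=
    Units.ext (by simp only [monUnit, Units.val_mul, mon_mul]; exact mon_zero_zero)
  rw [shortG2_eq_hexagon, prod_X_sub_C_hexagon, sum_hexagon, sum_pairs_hexagon]
  exact palindromic_quadratics_mul_of_fricke (fricke_of_mul_mul_eq_one h)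

end
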